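/- For j ≥ 1 let Δ_j = {2^{j−1}(2s−1) : s ∈ ℕ, s ≥ 1}, so that the Δ_j partition the positive integers, and let I = {A ⊆ ℕ : A ∩ Δ_j ≠ ∅ for only finitely many j}; then I is an admissible ideal. Work in ℝ² with the Euclidean norm, coordinatewise order, and the norm topology, and define t_n = n for all n ≥ 1 and x_n = (1, −2) if n is a power of 2, x_n = (−1, 2) otherwise. Then the weighted I_τ-cluster point set of x equals {(1,−2), (−1,2)}; in particular both (1,−2) and (−1,2) are weighted I_τ-cluster points of x, but their lattice supremum (1,−2) ⊔ (−1,2) = (1,2) and their lattice infimum (1,−2) ⊓ (−1,2) = (−1,−2) are not weighted I_τ-cluster points of x. -/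

import Mathlib

/-!
Every `Δ j` contains both a power of two, `2 ^ (j - 1)`, and a non-power of two,
`3 * 2 ^ (j - 1)`, so each of the two values of `x` is taken on a set outside the ideal and is
therefore a weighted cluster point. Any other point `c` stays at distance at least some `ε > 0`
from both values; since the weights satisfy `t n ≥ 1` for `n ≥ 1`, the weighted differences
`t n (x n - c)` then miss the ball of radius `ε` except at `n = 0`.
-/

open Topology Filter Set

/-- An admissible ideal on ℕ: contains all finite sets, closed under subsets
and finite unions, and does not contain ℕ itself. -/
def IsAdmissibleIdeal (I : Set (Set ℕ)) : Prop :=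
  (∀ A : Set ℕ, A.Finite → A ∈ I) ∧
  (∀ A B : Set ℕ, A ∈ I → B ⊆ A → B ∈ I) ∧
  (∀ A B : Set ℕ, A ∈ I → B ∈ I → A ∪ B ∈ I) ∧
  (Set.univ : Set ℕ) ∉ I

/-- `Δ j = {2 ^ (j - 1) * (2 * s - 1) : s ≥ 1}`, for `j ≥ 1`; these sets partition the
positive integers. -/
def Delta (j : ℕ) : Set ℕ := {m | ∃ s : ℕ, 1 ≤ s ∧ m = 2 ^ (j - 1) * (2 * s - 1)}

/-- The ideal of Example 8: sets meeting only finitely many of the `Δ j`. -/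
def idealDelta : Set (Set ℕ) :=
  {A | {j : ℕ | 1 ≤ j ∧ (A ∩ Delta j).Nonempty}.Finite}

open Classical in
/-- The sequence of Theorem 2.6: `x n = (1, -2)` if `n` is a power of 2 and
`x n = (-1, 2)` otherwise. -/
noncomputable def xSeq18 : ℕ → ℝ × ℝ := fun n =>
  if ∃ p : ℕ, n = 2 ^ p then (1, -2) else (-1, 2)

/-- The set of weighted `I`-τ-cluster points of `xSeq18` in ℝ² with weights `t n = n`. -/
def clusterSet18 : Set (ℝ × ℝ) :=
  {c | ∀ U ∈ 𝓝 (0 : ℝ × ℝ), {n : ℕ | (n : ℝ) • (xSeq18 n - c) ∈ U} ∉ idealDelta}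

lemma padicValNat_two_of_mem_Delta {j a : ℕ} (ha : a ∈ Delta j) :
    padicValNat 2 a = j - 1 := by
  obtain ⟨s, hs, rfl⟩ := ha
  have hodd : ¬ 2 ∣ 2 * s - 1 := by omega
  rw [padicValNat.mul (by positivity) (by omega), padicValNat.prime_pow,
    padicValNat.eq_zero_of_not_dvd hodd, add_zero]

lemma eq_of_mem_Delta {j k a : ℕ} (hj : 1 ≤ j) (hk : 1 ≤ k) (ha : a ∈ Delta j)
    (hb : a ∈ Delta k) : j = k := by
  have := (padicValNat_two_of_mem_Delta ha).symm.trans (padicValNat_two_of_mem_Delta hb)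
  omega

lemma pow_two_mul_mem_Delta (j : ℕ) {s : ℕ} (hs : 1 ≤ s) :
    2 ^ (j - 1) * (2 * s - 1) ∈ Delta j :=
  ⟨s, hs, rfl⟩

lemma mem_idealDelta_of_finite {A : Set ℕ} (hA : A.Finite) : A ∈ idealDelta := by
  refine (hA.biUnion fun a _ => ?_).subset
    (fun j ⟨hj, a, haA, haD⟩ => mem_biUnion haA (⟨hj, haD⟩ : 1 ≤ j ∧ a ∈ Delta j))
  exact Subsingleton.finite fun j hj k hk => eq_of_mem_Delta hj.1 hk.1 hj.2 hk.2

lemma mem_idealDelta_of_subset {A B : Set ℕ} (hA : A ∈ idealDelta) (hBA : B ⊆ A) :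
    B ∈ idealDelta :=
  hA.subset fun _ ⟨hj, hB⟩ => ⟨hj, hB.mono (inter_subset_inter_left _ hBA)⟩

lemma union_mem_idealDelta {A B : Set ℕ} (hA : A ∈ idealDelta) (hB : B ∈ idealDelta) :
    A ∪ B ∈ idealDelta := by
  refine (hA.union hB).subset ?_
  rintro j ⟨hj, a, haA | haB, haD⟩
  · exact Or.inl ⟨hj, a, haA, haD⟩
  · exact Or.inr ⟨hj, a, haB, haD⟩

lemma notMem_idealDelta_of_forall_inter_nonempty {A : Set ℕ}
    (h : ∀ j, 1 ≤ j → (A ∩ Delta j).Nonempty) : A ∉ idealDelta :=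
  (Ici_infinite 1).mono fun j hj => ⟨hj, h j hj⟩

lemma isAdmissibleIdeal_idealDelta : IsAdmissibleIdeal idealDelta :=
  ⟨fun _ => mem_idealDelta_of_finite, fun _ _ => mem_idealDelta_of_subset,
    fun _ _ => union_mem_idealDelta,
    notMem_idealDelta_of_forall_inter_nonempty fun j _ =>
      ⟨2 ^ (j - 1) * (2 * 1 - 1), mem_univ _, pow_two_mul_mem_Delta j le_rfl⟩⟩

lemma setOf_pow_two_notMem_idealDelta : {n : ℕ | ∃ p : ℕ, n = 2 ^ p} ∉ idealDelta :=
  notMem_idealDelta_of_forall_inter_nonempty fun j _ =>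
    ⟨2 ^ (j - 1) * (2 * 1 - 1), ⟨j - 1, by ring⟩, pow_two_mul_mem_Delta j le_rfl⟩

lemma setOf_not_pow_two_notMem_idealDelta :
    {n : ℕ | ¬∃ p : ℕ, n = 2 ^ p} ∉ idealDelta := by
  refine notMem_idealDelta_of_forall_inter_nonempty fun j _ =>
    ⟨2 ^ (j - 1) * (2 * 2 - 1), ?_, pow_two_mul_mem_Delta j (by norm_num)⟩
  rintro ⟨p, hp⟩
  have h3 : 3 ∣ 2 ^ p := ⟨2 ^ (j - 1), by omega⟩
  have := Nat.Prime.dvd_of_dvd_pow Nat.prime_three h3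
  omega

lemma setOf_natCast_smul_sub_mem_ball_subset_zero {E : Type*} [NormedAddCommGroup E]
    [NormedSpace ℝ E] {x : ℕ → E} {c : E} {ε : ℝ} (h : ∀ n, ε ≤ ‖x n - c‖) :
    {n : ℕ | (n : ℝ) • (x n - c) ∈ Metric.ball 0 ε} ⊆ {0} := by
  intro n hn
  by_contra h0
  have hn1 : (1 : ℝ) ≤ n := by exact_mod_cast Nat.one_le_iff_ne_zero.mpr h0
  rw [mem_ofPred_eq, mem_ball_zero_iff, norm_smul, Real.norm_natCast] at hn
  nlinarith [h n, norm_nonneg (x n - c)]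

lemma xSeq18_of_pow_two {n : ℕ} (h : ∃ p : ℕ, n = 2 ^ p) : xSeq18 n = (1, -2) := by
  unfold xSeq18
  exact if_pos h

lemma xSeq18_of_not_pow_two {n : ℕ} (h : ¬∃ p : ℕ, n = 2 ^ p) : xSeq18 n = (-1, 2) := by
  unfold xSeq18
  exact if_neg h

lemma xSeq18_mem (n : ℕ) : xSeq18 n ∈ ({(1, -2), (-1, 2)} : Set (ℝ × ℝ)) := by
  by_cases h : ∃ p : ℕ, n = 2 ^ p
  · exact Or.inl (xSeq18_of_pow_two h)
  · exact Or.inr (xSeq18_of_not_pow_two h)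

lemma mem_clusterSet18_of_notMem_idealDelta {c : ℝ × ℝ}
    (h : {n : ℕ | xSeq18 n = c} ∉ idealDelta) : c ∈ clusterSet18 := fun U hU hmem =>
  h <| mem_idealDelta_of_subset hmem fun n hn => by
    rw [mem_ofPred_eq, show xSeq18 n = c from hn, sub_self, smul_zero]
    exact mem_of_mem_nhds hU

lemma clusterSet18_subset : clusterSet18 ⊆ {(1, -2), (-1, 2)} := by
  intro c hc
  by_contra hcS
  obtain ⟨ε, hε, hball⟩ :=
    Metric.isOpen_iff.mp (toFinite {((1 : ℝ), (-2 : ℝ)), (-1, 2)}).isClosed.isOpen_compl c hcS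
  have hfar : ∀ n, ε ≤ ‖xSeq18 n - c‖ := fun n => by
    have : xSeq18 n ∉ Metric.ball c ε := fun hn => hball hn (xSeq18_mem n)
    rwa [Metric.mem_ball, not_lt, dist_eq_norm] at this
  exact hc _ (Metric.ball_mem_nhds 0 hε) <| mem_idealDelta_of_finite <|
    (finite_singleton 0).subset (setOf_natCast_smul_sub_mem_ball_subset_zero hfar)

lemma clusterSet18_eq : clusterSet18 = {(1, -2), (-1, 2)} := by
  refine clusterSet18_subset.antisymm (insert_subset_iff.mpr ⟨?_, singleton_subset_iff.mpr ?_⟩)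
  · refine mem_clusterSet18_of_notMem_idealDelta fun h => setOf_pow_two_notMem_idealDelta ?_
    exact mem_idealDelta_of_subset h fun n => xSeq18_of_pow_two
  · refine mem_clusterSet18_of_notMem_idealDelta fun h => setOf_not_pow_two_notMem_idealDelta ?_
    exact mem_idealDelta_of_subset h fun n => xSeq18_of_not_pow_two

/-- `idealDelta` is an admissible ideal, and the weighted `I`-τ-cluster point
set of the sequence above equals `{(1, -2), (-1, 2)}`; in particular both points are
weighted cluster points but their lattice supremum `(1, 2)` and lattice infimum `(-1, -2)`
are not. -/
theorem clusterSet_not_latticeClosed_example :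
    IsAdmissibleIdeal idealDelta ∧
    clusterSet18 = {((1 : ℝ), (-2 : ℝ)), ((-1 : ℝ), (2 : ℝ))} ∧
    (((1 : ℝ), (-2 : ℝ)) ⊔ ((-1 : ℝ), (2 : ℝ)) = ((1 : ℝ), (2 : ℝ)) ∧
      ((1 : ℝ), (2 : ℝ)) ∉ clusterSet18) ∧
    (((1 : ℝ), (-2 : ℝ)) ⊓ ((-1 : ℝ), (2 : ℝ)) = ((-1 : ℝ), (-2 : ℝ)) ∧
      ((-1 : ℝ), (-2 : ℝ)) ∉ clusterSet18) := by
  refine ⟨isAdmissibleIdeal_idealDelta, clusterSet18_eq, ⟨?_, ?_⟩, ⟨?_, ?_⟩⟩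
  · norm_num [Prod.ext_iff]
  · norm_num [clusterSet18_eq, Prod.ext_iff]
  · norm_num [Prod.ext_iff]
  · norm_num [clusterSet18_eq, Prod.ext_iff]
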